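/- arXiv:2011.02700 — 2 statements merged into one kernel-verified Lean document; each statement's English description precedes it below -/
import Mathlib

section
/- Suppose (2k−1)·α ≤ 1 and 0 < r < 1/ln τ. Then E1(n)²/E2(n) → 0 as n → ∞. -/
/-!
Bound `E2RB` from below by its single summand at an overlap `S` slightly above the typical
value `n / d`: that summand is `E1² · Bin(n, 1/d)(S) · F(S)^{rm}`, where `F` is `overlapRB`.
Take `S = ⌈(1 + ε) n / d⌉` with `ε = θ d^{-(k-1)}` and put `G = n d^{-(2k-1)}`. The binomial
probability costs at most a factor `(n + 1) exp (8 θ² G)` (the mode of `Bin(n, S/n)` has mass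
at least `1/(n+1)`, and the likelihood ratio against `Bin(n, 1/d)` is bounded by `log t ≤ t - 1`),
while `C(S,k)/C(n,k)` exceeds `d^{-k}` by the relative amount `k ε / 2`, so `F^{rm}` gains
`exp (2 G log n)`. The hypothesis `(2k - 1) α ≤ 1` says exactly that `G ≥ 1`, so the gain wins
by a factor of order `√n`, and `E1² / E2 ≤ 2 / √n` for large `n`.
-/

open Filter Finset

/-- Domain size `d = n^α` of Model RB. -/
noncomputable def dRB (α : ℝ) (n : ℕ) : ℝ := (n : ℝ) ^ α

/-- `m = n · ln d`. -/
noncomputable def mRB (α : ℝ) (n : ℕ) : ℝ := (n : ℝ) * Real.log (dRB α n)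

/-- `f_n(s) = 1 + (p/(1-p)) (s^k - d^{-k})/(1 - d^{-k})`. -/
noncomputable def fRB (α p : ℝ) (k n : ℕ) (s : ℝ) : ℝ :=
  1 + (p / (1 - p)) * (s ^ k - dRB α n ^ (-(k : ℝ))) / (1 - dRB α n ^ (-(k : ℝ)))

/-- `B_n(S) = C(n,S) (1/d)^S (1-1/d)^{n-S}`. -/
noncomputable def BRB (α : ℝ) (n S : ℕ) : ℝ :=
  (n.choose S : ℝ) * (1 / dRB α n) ^ S * (1 - 1 / dRB α n) ^ (n - S)

/-- `W_n(S) = f_n(S/n)^{r m}`. -/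
noncomputable def WRB (α p r : ℝ) (k n S : ℕ) : ℝ :=
  fRB α p k n ((S : ℝ) / (n : ℝ)) ^ (r * mRB α n)

/-- `Φ_n(S) = B_n(S) W_n(S)`. -/
noncomputable def PhiRB (α p r : ℝ) (k n S : ℕ) : ℝ := BRB α n S * WRB α p r k n S

/-- `g(s) = -k(k-1)(1-s)s^{k-1}/2`. -/
noncomputable def gRB (k : ℕ) (s : ℝ) : ℝ :=
  -((k : ℝ) * ((k : ℝ) - 1)) * (1 - s) * s ^ (k - 1) / 2

/-- `η₁(n) = 1/d + λ/(n^{1-(k-1)α} ln d)`. -/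
noncomputable def eta1 (α lam : ℝ) (k n : ℕ) : ℝ :=
  1 / dRB α n + lam / ((n : ℝ) ^ (1 - ((k : ℝ) - 1) * α) * Real.log (dRB α n))

/-- First moment `E[X] = d^n (1-p)^{r m}`. -/
noncomputable def E1RB (α p r : ℝ) (n : ℕ) : ℝ := dRB α n ^ n * (1 - p) ^ (r * mRB α n)

/-- Second moment `E[X²]`. -/
noncomputable def E2RB (α p r : ℝ) (k n : ℕ) : ℝ :=
  ∑ S ∈ Finset.range (n + 1),
    dRB α n ^ n * (n.choose S : ℝ) * (dRB α n - 1) ^ (n - S) *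
      ((1 - p) * ((S.choose k : ℝ) / (n.choose k : ℝ)) +
        ((1 - p) ^ 2 - p * (1 - p) * dRB α n ^ (-(k : ℝ)) / (1 - dRB α n ^ (-(k : ℝ)))) *
          (1 - (S.choose k : ℝ) / (n.choose k : ℝ))) ^ (r * mRB α n)


lemma Real.le_exp_sub_div_mul (a : ℝ) {b : ℝ} (hb : 0 < b) :
    a ≤ Real.exp ((a - b) / b) * b := by
  have := Real.add_one_le_exp ((a - b) / b)
  rwa [show (a - b) / b + 1 = a / b by field_simp; ring, div_le_iff₀ hb] at this

namespace bernsteinPolynomial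

lemma eval_eq (n ν : ℕ) (x : ℝ) :
    (bernsteinPolynomial ℝ n ν).eval x = n.choose ν * x ^ ν * (1 - x) ^ (n - ν) := by
  simp [bernsteinPolynomial]

lemma eval_nonneg (n ν : ℕ) {x : ℝ} (hx0 : 0 ≤ x) (hx1 : x ≤ 1) :
    0 ≤ (bernsteinPolynomial ℝ n ν).eval x := by
  rw [eval_eq]
  have : 0 ≤ 1 - x := sub_nonneg.mpr hx1
  positivity

lemma succ_mul_eval_succ {n ν : ℕ} (h : ν < n) (x : ℝ) :
    (ν + 1) * (1 - x) * (bernsteinPolynomial ℝ n (ν + 1)).eval x =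
      (n - ν) * x * (bernsteinPolynomial ℝ n ν).eval x := by
  have hchoose : (n.choose (ν + 1) : ℝ) * (ν + 1) = n.choose ν * (n - ν) := by
    have := congrArg (Nat.cast (R := ℝ)) (Nat.choose_succ_right_eq n ν)
    push_cast [Nat.cast_sub h.le] at this
    exact this
  have hpow : (1 - x) ^ (n - ν) = (1 - x) * (1 - x) ^ (n - (ν + 1)) := by
    rw [← pow_succ']; congr 1; omega
  rw [eval_eq, eval_eq, hpow, pow_succ]
  linear_combination (x ^ ν * x * (1 - x) ^ (n - (ν + 1)) * (1 - x)) * hchoose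

/-- Evaluated on `[0, 1]`, Bernstein polynomials are binomial probabilities: `S` is a mode of
`Bin(n, S / n)`. -/
lemma eval_le_eval_self_div {n S ν : ℕ} (hS0 : 0 < S) (hSn : S < n) (hν : ν ≤ n) :
    (bernsteinPolynomial ℝ n ν).eval ((S : ℝ) / n) ≤
      (bernsteinPolynomial ℝ n S).eval ((S : ℝ) / n) := by
  set x : ℝ := S / n
  set t : ℕ → ℝ := fun j ↦ (bernsteinPolynomial ℝ n j).eval x
  have hn : (0 : ℝ) < n := by exact_mod_cast hS0.trans hSn
  have hx0 : 0 < x := by positivity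
  have hx1 : x < 1 := (div_lt_one hn).mpr (by exact_mod_cast hSn)
  have ht : ∀ j, 0 ≤ t j := fun j ↦ eval_nonneg n j hx0.le hx1.le
  have hS : (S : ℝ) = n * x := by simp only [x]; field_simp
  have up : ∀ j, j + 1 ≤ S → t j ≤ t (j + 1) := by
    intro j hj
    have hj' : (j : ℝ) + 1 ≤ S := by exact_mod_cast hj
    have hjn : (j : ℝ) < n := by exact_mod_cast (show j < n by omega)
    have hcoef : (j + 1) * (1 - x) ≤ (n - j) * x := by nlinarith
    refine le_of_mul_le_mul_left ?_ (show 0 < (n - j) * x by nlinarith)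
    rw [← succ_mul_eval_succ (by omega)]
    exact mul_le_mul_of_nonneg_right hcoef (ht _)
  have down : ∀ j, S ≤ j → j < n → t (j + 1) ≤ t j := by
    intro j hSj hjn
    have hSj' : (S : ℝ) ≤ j := by exact_mod_cast hSj
    have hcoef : (n - j) * x ≤ (j + 1) * (1 - x) := by nlinarith
    refine le_of_mul_le_mul_left ?_ (show 0 < ((j : ℝ) + 1) * (1 - x) by nlinarith)
    rw [succ_mul_eval_succ hjn]
    exact mul_le_mul_of_nonneg_right hcoef (ht _)
  rcases le_total ν S with hνS | hSν
  · exact Nat.le_induction (P := fun m _ ↦ m ≤ S → t ν ≤ t m) (fun _ ↦ le_rfl)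
      (fun m _ ih hm ↦ (ih (by omega)).trans (up m hm)) S hνS le_rfl
  · exact Nat.le_induction (P := fun m _ ↦ m ≤ n → t m ≤ t S) (fun _ ↦ le_rfl)
      (fun m hm ih hmn ↦ (down m hm hmn).trans (ih (by omega))) ν hSν hν

lemma one_le_succ_mul_eval_self_div {n S : ℕ} (hS0 : 0 < S) (hSn : S < n) :
    1 ≤ (n + 1) * (bernsteinPolynomial ℝ n S).eval ((S : ℝ) / n) := by
  calc (1 : ℝ)
      = ∑ ν ∈ range (n + 1), (bernsteinPolynomial ℝ n ν).eval ((S : ℝ) / n) := by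
        rw [← Polynomial.eval_finsetSum, sum, Polynomial.eval_one]
    _ ≤ ∑ _ν ∈ range (n + 1), (bernsteinPolynomial ℝ n S).eval ((S : ℝ) / n) :=
        sum_le_sum fun ν hν ↦
          eval_le_eval_self_div hS0 hSn (Nat.lt_succ_iff.mp (mem_range.mp hν))
    _ = (n + 1) * (bernsteinPolynomial ℝ n S).eval ((S : ℝ) / n) := by
        rw [sum_const, card_range, nsmul_eq_mul]; push_cast; ring

lemma eval_self_div_le_exp_mul_eval {n S : ℕ} (hn : 0 < n) (hSn : S ≤ n) {u : ℝ} (hu0 : 0 < u)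
    (hu1 : u < 1) :
    (bernsteinPolynomial ℝ n S).eval ((S : ℝ) / n) ≤
      Real.exp (n * ((S : ℝ) / n - u) ^ 2 / (u * (1 - u))) *
        (bernsteinPolynomial ℝ n S).eval u := by
  set x : ℝ := S / n
  have hn' : (0 : ℝ) < n := by exact_mod_cast hn
  have hx0 : 0 ≤ x := by positivity
  have hx1 : x ≤ 1 := (div_le_one hn').mpr (by exact_mod_cast hSn)
  have hS : (S : ℝ) = n * x := by simp only [x]; field_simp
  have hnS : ((n - S : ℕ) : ℝ) = n * (1 - x) := by rw [Nat.cast_sub hSn, hS]; ring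
  have hexp : (n : ℝ) * (x - u) ^ 2 / (u * (1 - u)) =
      S * ((x - u) / u) + (n - S : ℕ) * ((u - x) / (1 - u)) := by
    have : 1 - u ≠ 0 := by linarith
    rw [hnS, hS]; field_simp; ring
  have hxS : x ^ S ≤ Real.exp ((x - u) / u) ^ S * u ^ S := by
    rw [← mul_pow]; exact pow_le_pow_left₀ hx0 (Real.le_exp_sub_div_mul x hu0) S
  have hxnS : (1 - x) ^ (n - S) ≤
      Real.exp ((u - x) / (1 - u)) ^ (n - S) * (1 - u) ^ (n - S) := by
    have := Real.le_exp_sub_div_mul (1 - x) (sub_pos.mpr hu1)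
    rw [show 1 - x - (1 - u) = u - x by ring] at this
    rw [← mul_pow]; exact pow_le_pow_left₀ (sub_nonneg.mpr hx1) this _
  rw [eval_eq, eval_eq, hexp, Real.exp_add, Real.exp_nat_mul, Real.exp_nat_mul]
  calc (n.choose S : ℝ) * x ^ S * (1 - x) ^ (n - S)
      ≤ n.choose S * (Real.exp ((x - u) / u) ^ S * u ^ S) *
          (Real.exp ((u - x) / (1 - u)) ^ (n - S) * (1 - u) ^ (n - S)) := by gcongr
    _ = _ := by ring

lemma exp_neg_le_succ_mul_eval {n S : ℕ} (hS0 : 0 < S) (hSn : S < n) {u : ℝ} (hu0 : 0 < u)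
    (hu1 : u < 1) :
    Real.exp (-(n * ((S : ℝ) / n - u) ^ 2 / (u * (1 - u)))) ≤
      (n + 1) * (bernsteinPolynomial ℝ n S).eval u := by
  set D : ℝ := n * ((S : ℝ) / n - u) ^ 2 / (u * (1 - u))
  rw [Real.exp_neg, inv_le_iff_one_le_mul₀ (Real.exp_pos D)]
  calc 1 ≤ (n + 1) * (bernsteinPolynomial ℝ n S).eval ((S : ℝ) / n) :=
        one_le_succ_mul_eval_self_div hS0 hSn
    _ ≤ (n + 1) * (Real.exp D * (bernsteinPolynomial ℝ n S).eval u) := by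
        gcongr; exact eval_self_div_le_exp_mul_eval (hS0.trans hSn) hSn.le hu0 hu1
    _ = _ := by ring

end bernsteinPolynomial

lemma natCeil_le_one_add_two_mul {ε t : ℝ} (ht : 0 ≤ t) (h : 1 ≤ ε * t) :
    (⌈(1 + ε) * t⌉₊ : ℝ) ≤ (1 + 2 * ε) * t := by
  have := Nat.ceil_lt_add_one (show 0 ≤ (1 + ε) * t by linarith)
  linarith

lemma one_add_half_mul_le_natCeil_add_one_sub {ε t : ℝ} {k : ℕ} (h : k ≤ ε * t / 2) :
    (1 + ε / 2) * t ≤ ⌈(1 + ε) * t⌉₊ + 1 - k := by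
  have := Nat.le_ceil ((1 + ε) * t)
  linarith

lemma natCeil_one_add_mul_lt {n : ℕ} {u ε : ℝ} (hu0 : 0 ≤ u) (hu : u ≤ 1 / 6)
    (hε : ε ≤ 1) (h : 1 ≤ ε * (n * u)) : ⌈(1 + ε) * (n * u)⌉₊ < n := by
  have hS := natCeil_le_one_add_two_mul (by positivity) h
  have hn : (0 : ℝ) < n := by
    rcases n.eq_zero_or_pos with rfl | hn
    · norm_num at h
    · exact_mod_cast hn
  have : (1 + 2 * ε) * (n * u) < n := by
    nlinarith [mul_nonneg (sub_nonneg.mpr hε) (mul_nonneg hn.le hu0)]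
  exact_mod_cast hS.trans_lt this

lemma bernsteinPolynomial.exp_neg_le_succ_mul_eval_natCeil {n : ℕ} {u ε : ℝ} (hu0 : 0 < u)
    (hu : u ≤ 1 / 6) (hε0 : 0 < ε) (hε1 : ε ≤ 1) (h : 1 ≤ ε * (n * u)) :
    Real.exp (-(8 * ε ^ 2 * (n * u))) ≤
      (n + 1) * (bernsteinPolynomial ℝ n ⌈(1 + ε) * (n * u)⌉₊).eval u := by
  set S := ⌈(1 + ε) * (n * u)⌉₊
  have hSn : S < n := natCeil_one_add_mul_lt hu0.le hu hε1 h
  have hn : (0 : ℝ) < n := by exact_mod_cast (Nat.zero_le _).trans_lt hSn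
  have hlo : (1 + ε) * u ≤ S / n := by
    rw [le_div_iff₀ hn]; linarith [Nat.le_ceil ((1 + ε) * (n * u))]
  have hhi : (S : ℝ) / n ≤ (1 + 2 * ε) * u := by
    rw [div_le_iff₀ hn]; linarith [natCeil_le_one_add_two_mul (by positivity) h]
  have hS0 : 0 < S := by
    have : (0 : ℝ) < S / n := lt_of_lt_of_le (by positivity) hlo
    exact_mod_cast (div_pos_iff_of_pos_right hn).mp this
  refine le_trans (Real.exp_le_exp.mpr ?_) (exp_neg_le_succ_mul_eval hS0 hSn hu0 (by linarith))
  rw [neg_le_neg_iff, div_le_iff₀ (by nlinarith)]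
  have hx : ((S : ℝ) / n - u) ^ 2 ≤ (2 * ε * u) ^ 2 :=
    sq_le_sq' (by nlinarith [mul_pos hε0 hu0]) (by linarith)
  calc n * ((S : ℝ) / n - u) ^ 2 ≤ n * (2 * ε * u) ^ 2 := by gcongr
    _ ≤ 8 * ε ^ 2 * (n * u) * (u * (1 - u)) := by
      nlinarith [mul_nonneg (mul_nonneg (sq_nonneg ε) (mul_nonneg hn.le (sq_nonneg u)))
        (show 0 ≤ 1 - 2 * u by linarith)]

lemma Nat.pow_sub_div_le_choose_div_choose {k n S : ℕ} (hkS : k ≤ S + 1) (hkn : k ≤ n) :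
    (((S : ℝ) + 1 - k) / n) ^ k ≤ (S.choose k : ℝ) / n.choose k := by
  have hcast : ((S + 1 - k : ℕ) : ℝ) = S + 1 - k := by push_cast [Nat.cast_sub hkS]; ring
  calc (((S : ℝ) + 1 - k) / n) ^ k
      = (((S + 1 - k : ℕ) : ℝ) ^ k / k.factorial) / ((n : ℝ) ^ k / k.factorial) := by
        rw [hcast, div_pow]; field_simp
    _ ≤ (S.choose k : ℝ) / n.choose k :=
        div_le_div₀ (Nat.cast_nonneg _) (Nat.pow_le_choose k S)
          (by exact_mod_cast Nat.choose_pos hkn) (Nat.choose_le_pow_div k n)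

lemma Real.exp_mul_half_le_one_add_rpow {y M : ℝ} (hy0 : 0 ≤ y) (hy2 : y ≤ 2) (hM : 0 ≤ M) :
    Real.exp (M * (y / 2)) ≤ (1 + y) ^ M := by
  have hlog : y / 2 ≤ Real.log (1 + y) := by
    refine le_trans ?_ (Real.le_log_one_add_of_nonneg hy0)
    rw [div_le_div_iff₀ (by norm_num) (by linarith)]
    nlinarith
  rw [Real.rpow_def_of_pos (by linarith), mul_comm (Real.log _)]
  exact Real.exp_le_exp.mpr (mul_le_mul_of_nonneg_left hlog hM)

lemma sqrt_le_two_mul_of_exp_le {N G a B F : ℝ} (hN : 1 ≤ N) (hG : 1 ≤ G)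
    (ha : 2 * a ≤ Real.log N) (hB : Real.exp (-(a * G)) ≤ (N + 1) * B)
    (hF : Real.exp (2 * G * Real.log N) ≤ F) :
    √N ≤ 2 * (B * F) := by
  have hN0 : 0 < N := by linarith
  have hlog : 0 ≤ Real.log N := Real.log_nonneg hN
  have hpow : N * √N = Real.exp (3 / 2 * Real.log N) := by
    rw [Real.sqrt_eq_rpow, ← Real.rpow_one_add' hN0.le (by norm_num), Real.rpow_def_of_pos hN0]
    ring_nf
  have hexp : 3 / 2 * Real.log N ≤ -(a * G) + 2 * G * Real.log N := by nlinarith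
  refine le_of_mul_le_mul_left (a := N + 1) ?_ (by linarith)
  calc (N + 1) * √N ≤ 2 * (N * √N) := by nlinarith [Real.sqrt_nonneg N]
    _ ≤ 2 * (Real.exp (-(a * G)) * Real.exp (2 * G * Real.log N)) := by
      rw [hpow, ← Real.exp_add]; gcongr
    _ ≤ 2 * (((N + 1) * B) * F) := by
      gcongr 2 * ?_
      exact mul_le_mul hB hF (Real.exp_pos _).le ((Real.exp_pos _).le.trans hB)
    _ = (N + 1) * (2 * (B * F)) := by ring

lemma dRB_rpow_neg_natCast (α : ℝ) (n k : ℕ) :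
    dRB α n ^ (-(k : ℝ)) = (dRB α n)⁻¹ ^ k := by
  have hd : 0 ≤ dRB α n := Real.rpow_nonneg (Nat.cast_nonneg n) α
  rw [Real.rpow_neg hd, Real.rpow_natCast, inv_pow]

lemma natCast_mul_inv_dRB_pow {n : ℕ} (hn : 0 < n) (α : ℝ) (j : ℕ) :
    n * (dRB α n)⁻¹ ^ j = (n : ℝ) ^ (1 - j * α) := by
  have hn' : (0 : ℝ) < n := by exact_mod_cast hn
  rw [dRB, ← Real.rpow_neg hn'.le, ← Real.rpow_mul_natCast hn'.le, sub_eq_add_neg,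
    Real.rpow_add hn', Real.rpow_one]
  ring_nf

lemma eventually_inv_dRB_pow_le {α b : ℝ} (hα : 0 < α) {j : ℕ} (hj : j ≠ 0) (hb : 0 < b) :
    ∀ᶠ n : ℕ in atTop, (dRB α n)⁻¹ ^ j ≤ b := by
  have hu := ((tendsto_rpow_atTop hα).comp tendsto_natCast_atTop_atTop).inv_tendsto_atTop
  have := hu.pow j
  rw [zero_pow hj] at this
  exact this.eventually (eventually_le_nhds hb)

/-- `fRB` with `(S/n)^k` replaced by the exact overlap probability `C(S,k)/C(n,k)`. -/
noncomputable def overlapRB (α p : ℝ) (k n S : ℕ) : ℝ :=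
  1 + (p / (1 - p)) * ((S.choose k : ℝ) / n.choose k - dRB α n ^ (-(k : ℝ))) /
    (1 - dRB α n ^ (-(k : ℝ)))

lemma E2RB_base_eq {p q v : ℝ} (hp : p ≠ 1) (hv : v ≠ 1) :
    (1 - p) * q + ((1 - p) ^ 2 - p * (1 - p) * v / (1 - v)) * (1 - q) =
      (1 - p) ^ 2 * (1 + (p / (1 - p)) * (q - v) / (1 - v)) := by
  have : 1 - p ≠ 0 := sub_ne_zero.mpr hp.symm
  have : 1 - v ≠ 0 := sub_ne_zero.mpr hv.symm
  field_simp
  ring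

lemma E2RB_base_nonneg {p q v : ℝ} (hp : p < 1) (hv : v < 1) (hvp : v ≤ 1 - p) (hq0 : 0 ≤ q)
    (hq1 : q ≤ 1) :
    0 ≤ (1 - p) * q + ((1 - p) ^ 2 - p * (1 - p) * v / (1 - v)) * (1 - q) := by
  have hcoef : (1 - p) ^ 2 - p * (1 - p) * v / (1 - v) = (1 - p) * (1 - p - v) / (1 - v) := by
    have : 1 - v ≠ 0 := by linarith
    field_simp
    ring
  rw [hcoef]
  have : 0 ≤ 1 - p := by linarith
  have : 0 ≤ 1 - p - v := by linarith
  have : 0 < 1 - v := by linarith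
  have : 0 ≤ 1 - q := by linarith
  positivity

lemma BRB_eq_eval (α : ℝ) (n S : ℕ) :
    BRB α n S = (bernsteinPolynomial ℝ n S).eval (dRB α n)⁻¹ := by
  rw [bernsteinPolynomial.eval_eq, BRB, one_div]

/-- The `S`-th summand of `E2RB` is `E1RB² · BRB · overlapRB^{rm}`; no summand is negative. -/
lemma sq_E1RB_mul_le_E2RB {α p r : ℝ} {k n S : ℕ} (hp0 : 0 < p) (hp1 : p < 1)
    (hd : 1 ≤ dRB α n) (hv : dRB α n ^ (-(k : ℝ)) ≤ 1 - p) (hSn : S ≤ n) :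
    E1RB α p r n ^ 2 * (BRB α n S * overlapRB α p k n S ^ (r * mRB α n)) ≤
      E2RB α p r k n := by
  rw [E1RB, BRB]
  set d := dRB α n
  set v := d ^ (-(k : ℝ))
  set m := r * mRB α n
  have hv1 : v < 1 := by linarith
  have hq (j : ℕ) (hj : j ≤ n) :
      0 ≤ (j.choose k : ℝ) / n.choose k ∧ (j.choose k : ℝ) / n.choose k ≤ 1 :=
    ⟨by positivity,
      div_le_one_of_le₀ (by exact_mod_cast Nat.choose_le_choose k hj) (Nat.cast_nonneg _)⟩
  have hterm : ∀ j ∈ range (n + 1), 0 ≤ d ^ n * (n.choose j : ℝ) * (d - 1) ^ (n - j) *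
      ((1 - p) * ((j.choose k : ℝ) / n.choose k) +
        ((1 - p) ^ 2 - p * (1 - p) * v / (1 - v)) * (1 - (j.choose k : ℝ) / n.choose k)) ^ m := by
    intro j hj
    have hj := hq j (Nat.lt_succ_iff.mp (mem_range.mp hj))
    have := E2RB_base_nonneg hp1 hv1 hv hj.1 hj.2
    have : 0 ≤ d - 1 := by linarith
    positivity
  have hF : 0 ≤ overlapRB α p k n S := by
    have hbase := E2RB_base_nonneg hp1 hv1 hv (hq S hSn).1 (hq S hSn).2
    rw [E2RB_base_eq hp1.ne hv1.ne] at hbase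
    exact nonneg_of_mul_nonneg_right hbase (by nlinarith)
  have hpow : d ^ n * (d - 1) ^ (n - S) =
      (d ^ n) ^ 2 * ((1 / d) ^ S * (1 - 1 / d) ^ (n - S)) := by
    have hd0 : d ≠ 0 := by positivity
    have hdS : d ^ S * (1 / d) ^ S = 1 := by rw [← mul_pow, mul_one_div_cancel hd0, one_pow]
    rw [show d - 1 = d * (1 - 1 / d) by field_simp, mul_pow, ← pow_mul_pow_sub d hSn]
    linear_combination (-(d ^ S * (d ^ (n - S)) ^ 2 * (1 - 1 / d) ^ (n - S))) * hdS
  have hrpow : ((1 - p) ^ 2 * overlapRB α p k n S) ^ m =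
      ((1 - p) ^ m) ^ 2 * overlapRB α p k n S ^ m := by
    rw [Real.mul_rpow (sq_nonneg _) hF, Real.rpow_pow_comm (by linarith)]
  refine le_of_eq_of_le ?_ (single_le_sum hterm (mem_range.mpr (Nat.lt_succ_of_le hSn)))
  rw [E2RB_base_eq hp1.ne hv1.ne, ← overlapRB, hrpow]
  linear_combination -(n.choose S * ((1 - p) ^ m) ^ 2 * overlapRB α p k n S ^ m) * hpow

lemma one_add_mul_sub_le_overlapRB {α p : ℝ} {k n S : ℕ} (hp0 : 0 < p) (hp1 : p < 1)
    (hv : (dRB α n)⁻¹ ^ k < 1) (hq : (dRB α n)⁻¹ ^ k ≤ (S.choose k : ℝ) / n.choose k) :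
    1 + p / (1 - p) * ((S.choose k : ℝ) / n.choose k - (dRB α n)⁻¹ ^ k) ≤
      overlapRB α p k n S := by
  have hv0 : 0 ≤ (dRB α n)⁻¹ ^ k := by
    have : 0 ≤ dRB α n := Real.rpow_nonneg (Nat.cast_nonneg n) α
    positivity
  have hc : 0 ≤ p / (1 - p) := div_nonneg hp0.le (by linarith)
  rw [overlapRB, dRB_rpow_neg_natCast, add_le_add_iff_left]
  exact le_div_self (mul_nonneg hc (by linarith)) (by linarith) (by linarith)

/-- At the overlap `S = ⌈(1 + ε) n / d⌉`, `C(S,k)/C(n,k) ≥ (1 + k ε / 2) d^{-k}`. -/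
lemma exp_le_overlapRB_rpow {α p r ε : ℝ} {k n : ℕ} (hp0 : 0 < p) (hp1 : p < 1) (hr : 0 ≤ r)
    (hd : 1 < dRB α n) (hk : 1 ≤ k) (hkn : k ≤ n) (hε : 0 ≤ ε)
    (hεk : 2 * k ≤ ε * (n * (dRB α n)⁻¹))
    (hy : p / (1 - p) * k * ε * (dRB α n)⁻¹ ^ k ≤ 4) :
    Real.exp (r * mRB α n * (p / (1 - p) * k * ε * (dRB α n)⁻¹ ^ k / 4)) ≤
      overlapRB α p k n ⌈(1 + ε) * (n * (dRB α n)⁻¹)⌉₊ ^ (r * mRB α n) := by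
  set u := (dRB α n)⁻¹
  set S := ⌈(1 + ε) * (n * u)⌉₊
  set q : ℝ := (S.choose k : ℝ) / n.choose k
  set c := p / (1 - p)
  have hu0 : 0 < u := inv_pos.mpr (by linarith)
  have hn : (0 : ℝ) < n := by exact_mod_cast (show 0 < n by omega)
  have hwindow := one_add_half_mul_le_natCeil_add_one_sub (k := k)
    (show (k : ℝ) ≤ ε * (n * u) / 2 by linarith)
  have hkS : k ≤ S + 1 := by
    have : (k : ℝ) ≤ S + 1 := by nlinarith
    exact_mod_cast this
  have hq : (1 + k * (ε / 2)) * u ^ k ≤ q :=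
    calc (1 + k * (ε / 2)) * u ^ k ≤ (1 + ε / 2) ^ k * u ^ k := by
          gcongr; exact one_add_mul_le_pow (by linarith) k
      _ = ((1 + ε / 2) * u) ^ k := by rw [mul_pow]
      _ ≤ (((S : ℝ) + 1 - k) / n) ^ k := by
          gcongr; rw [le_div_iff₀ hn]; linarith
      _ ≤ q := Nat.pow_sub_div_le_choose_div_choose hkS hkn
  have hvq : u ^ k ≤ q := by
    nlinarith [mul_nonneg (mul_nonneg (Nat.cast_nonneg k) hε) (pow_pos hu0 k).le]
  have hv1 : u ^ k < 1 := pow_lt_one₀ hu0.le (inv_lt_one_of_one_lt₀ hd) (by omega)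
  have hc : 0 ≤ c := div_nonneg hp0.le (by linarith)
  have hm : 0 ≤ r * mRB α n := mul_nonneg hr (mul_nonneg hn.le (Real.log_nonneg hd.le))
  have hyF : 1 + c * k * ε * u ^ k / 2 ≤ overlapRB α p k n S := by
    refine le_trans ?_ (one_add_mul_sub_le_overlapRB hp0 hp1 hv1 hvq)
    nlinarith [mul_le_mul_of_nonneg_left hq hc]
  calc Real.exp (r * mRB α n * (c * k * ε * u ^ k / 4))
      = Real.exp (r * mRB α n * (c * k * ε * u ^ k / 2 / 2)) := by ring_nf
    _ ≤ (1 + c * k * ε * u ^ k / 2) ^ (r * mRB α n) :=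
        Real.exp_mul_half_le_one_add_rpow (by positivity) (by linarith) hm
    _ ≤ _ := Real.rpow_le_rpow (by positivity) hyF hm

lemma exists_sqrt_le_two_mul_BRB_mul_overlapRB_rpow {α p r θ : ℝ} {k n : ℕ} (hp0 : 0 < p)
    (hp1 : p < 1) (hr : 0 ≤ r) (hk : 1 ≤ k) (hθ0 : 0 < θ)
    (hθ : r * α * (p / (1 - p)) * k * θ = 8) (hd : 6 ≤ dRB α n)
    (hε : θ * (dRB α n)⁻¹ ^ (k - 1) ≤ 1) (hεk : 2 * k ≤ θ * (n * (dRB α n)⁻¹ ^ k))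
    (hy : p / (1 - p) * k * (dRB α n)⁻¹ ^ k ≤ 4)
    (hG : 1 ≤ n * (dRB α n)⁻¹ ^ (2 * k - 1)) (hL : 16 * θ ^ 2 ≤ Real.log n) :
    ∃ S ≤ n, √n ≤ 2 * (BRB α n S * overlapRB α p k n S ^ (r * mRB α n)) := by
  set u := (dRB α n)⁻¹
  set ε := θ * u ^ (k - 1)
  set S := ⌈(1 + ε) * (n * u)⌉₊
  set c := p / (1 - p)
  have hk1 : (1 : ℝ) ≤ k := by exact_mod_cast hk
  have hc : 0 ≤ c := div_nonneg hp0.le (by linarith)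
  have hu0 : 0 < u := inv_pos.mpr (by linarith)
  have hu : u ≤ 1 / 6 := by rw [one_div]; exact inv_anti₀ (by norm_num) hd
  have huk : u ^ (k - 1) * u = u ^ k := by rw [← pow_succ, Nat.sub_add_cancel hk]
  have hεnu : ε * (n * u) = θ * (n * u ^ k) := by rw [← huk]; ring
  have hSn : S < n := natCeil_one_add_mul_lt hu0.le hu hε (by linarith)
  have hkn : k ≤ n := by
    have : (k : ℝ) ≤ S := by
      linarith [Nat.le_ceil ((1 + ε) * (n * u)), mul_nonneg (Nat.cast_nonneg n) hu0.le]
    have : k ≤ S := by exact_mod_cast this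
    omega
  have hpow : u ^ (k - 1) * u ^ k = u ^ (2 * k - 1) := by rw [← pow_add]; congr 1; omega
  have hbin := bernsteinPolynomial.exp_neg_le_succ_mul_eval_natCeil hu0 hu (by positivity) hε
    (by linarith)
  have hov := exp_le_overlapRB_rpow (ε := ε) hp0 hp1 hr (by linarith) hk hkn (by positivity)
    (by linarith)
    (by nlinarith [mul_le_mul_of_nonneg_right hε (by positivity : 0 ≤ c * k * u ^ k)])
  have hcost : 8 * ε ^ 2 * (n * u) = 8 * θ ^ 2 * (n * u ^ (2 * k - 1)) := by
    rw [← hpow, ← huk]; ring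
  have hgain :
      r * mRB α n * (c * k * ε * u ^ k / 4) = 2 * (n * u ^ (2 * k - 1)) * Real.log n := by
    rw [mRB, dRB, Real.log_rpow (by exact_mod_cast (Nat.zero_le _).trans_lt hSn), ← hpow]
    linear_combination (n * u ^ (k - 1) * u ^ k * Real.log n / 4) * hθ
  rw [hcost] at hbin
  rw [hgain] at hov
  refine ⟨S, hSn.le, ?_⟩
  rw [BRB_eq_eval]
  exact sqrt_le_two_mul_of_exp_le (by exact_mod_cast hkn.trans' hk) hG (by linarith) hbin hov

lemma eventually_exists_sqrt_le_two_mul_BRB_mul_overlapRB_rpow {α p r : ℝ} {k : ℕ}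
    (hα : 0 < α) (hk : 2 ≤ k) (hp0 : 0 < p) (hp1 : p < 1)
    (hkα : (2 * (k : ℝ) - 1) * α ≤ 1) (hr : 0 < r) :
    ∀ᶠ n : ℕ in atTop,
      ∃ S ≤ n, √n ≤ 2 * (BRB α n S * overlapRB α p k n S ^ (r * mRB α n)) := by
  set c := p / (1 - p)
  have hk' : (2 : ℝ) ≤ k := by exact_mod_cast hk
  have hck : 0 < c * k := mul_pos (div_pos hp0 (by linarith)) (by linarith)
  -- `θ` makes the gain of `overlapRB ^ (r m)` exactly `exp (2 n d^{-(2k-1)} log n)`.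
  set θ := 8 / (r * α * c * k)
  have hθ0 : 0 < θ := by positivity
  have hθ : r * α * c * k * θ = 8 := mul_div_cancel₀ _ (by positivity)
  have hcast := tendsto_natCast_atTop_atTop (R := ℝ)
  have hεk : ∀ᶠ n : ℕ in atTop, 2 * k ≤ θ * (n * (dRB α n)⁻¹ ^ k) := by
    have hexp : 0 < 1 - k * α := by nlinarith
    refine Tendsto.eventually_ge_atTop ?_ _
    refine (((tendsto_rpow_atTop hexp).comp hcast).const_mul_atTop hθ0).congr' ?_
    filter_upwards [eventually_gt_atTop 0] with n hn
    rw [Function.comp_apply, natCast_mul_inv_dRB_pow hn]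
  have hG : ∀ᶠ n : ℕ in atTop, 1 ≤ n * (dRB α n)⁻¹ ^ (2 * k - 1) := by
    filter_upwards [eventually_gt_atTop 0] with n hn
    rw [natCast_mul_inv_dRB_pow hn]
    refine Real.one_le_rpow (by exact_mod_cast hn) ?_
    push_cast [show 1 ≤ 2 * k by omega]
    linarith
  filter_upwards [((tendsto_rpow_atTop hα).comp hcast).eventually_ge_atTop 6,
    eventually_inv_dRB_pow_le hα (show k - 1 ≠ 0 by omega) (inv_pos.mpr hθ0), hεk,
    eventually_inv_dRB_pow_le hα (show k ≠ 0 by omega) (div_pos four_pos hck), hG,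
    (Real.tendsto_log_atTop.comp hcast).eventually_ge_atTop (16 * θ ^ 2)]
    with n hd hε hεk hy hG hL
  refine exists_sqrt_le_two_mul_BRB_mul_overlapRB_rpow hp0 hp1 hr.le (by omega) hθ0 hθ hd ?_ hεk
    ?_ hG hL
  · rwa [← le_div_iff₀' hθ0, one_div]
  · rwa [← le_div_iff₀' hck]

lemma eventually_sq_E1RB_div_E2RB_le {α p r : ℝ} {k : ℕ} (hα : 0 < α) (hk : 2 ≤ k)
    (hp0 : 0 < p) (hp1 : p < 1) (hkα : (2 * (k : ℝ) - 1) * α ≤ 1) (hr : 0 < r) :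
    ∀ᶠ n : ℕ in atTop, 0 ≤ E1RB α p r n ^ 2 / E2RB α p r k n ∧
      E1RB α p r n ^ 2 / E2RB α p r k n ≤ 2 / √n := by
  filter_upwards [eventually_gt_atTop 0,
    eventually_exists_sqrt_le_two_mul_BRB_mul_overlapRB_rpow hα hk hp0 hp1 hkα hr,
    eventually_inv_dRB_pow_le hα (show k ≠ 0 by omega) (show 0 < 1 - p by linarith),
    ((tendsto_rpow_atTop hα).comp tendsto_natCast_atTop_atTop).eventually_ge_atTop 1]
    with n hn ⟨S, hSn, hX⟩ hv hd
  have hle := sq_E1RB_mul_le_E2RB (r := r) hp0 hp1 hd (by rwa [dRB_rpow_neg_natCast]) hSn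
  set X := BRB α n S * overlapRB α p k n S ^ (r * mRB α n)
  have hsqrt : 0 < √(n : ℝ) := Real.sqrt_pos.mpr (by exact_mod_cast hn)
  have hX0 : 0 < X := by linarith
  have hE2 : 0 ≤ E2RB α p r k n := (mul_nonneg (sq_nonneg _) hX0.le).trans hle
  have hXinv : X⁻¹ ≤ 2 / √n := by
    rw [inv_le_iff_one_le_mul₀ hX0, div_mul_eq_mul_div, le_div_iff₀ hsqrt]
    linarith
  refine ⟨div_nonneg (sq_nonneg _) hE2, div_le_of_le_mul₀ hE2 (by positivity) ?_⟩
  calc E1RB α p r n ^ 2 = E1RB α p r n ^ 2 * X * X⁻¹ := by field_simp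
    _ ≤ E2RB α p r k n * (2 / √n) := by gcongr
    _ = 2 / √n * E2RB α p r k n := mul_comm _ _

theorem stmt1_general (α p r : ℝ) (k : ℕ) (hα : 0 < α) (hk : 2 ≤ k)
    (hp0 : 0 < p) (hp1 : p < 1)
    (hkα : (2 * (k : ℝ) - 1) * α ≤ 1)
    (hr0 : 0 < r) :
    Filter.Tendsto (fun n : ℕ => E1RB α p r n ^ 2 / E2RB α p r k n)
      Filter.atTop (nhds 0) := by
  have hbound := eventually_sq_E1RB_div_E2RB_le hα hk hp0 hp1 hkα hr0
  have hlim : Tendsto (fun n : ℕ ↦ 2 / √(n : ℝ)) atTop (nhds 0) := by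
    simpa [div_eq_mul_inv] using
      ((Real.tendsto_sqrt_atTop.comp tendsto_natCast_atTop_atTop).inv_tendsto_atTop).const_mul 2
  exact squeeze_zero' (hbound.mono fun _ h ↦ h.1) (hbound.mono fun _ h ↦ h.2) hlim

/-- if (2k-1)α ≤ 1 and 0 < r < 1/ln τ, then E[X]²/E[X²] → 0. -/
theorem stmt1 (α p r τ : ℝ) (k : ℕ) (hα : 0 < α) (hk : 2 ≤ k)
    (hp0 : 0 < p) (hp1 : p < 1) (hτ : τ = 1 / (1 - p))
    (hkα : (2 * (k : ℝ) - 1) * α ≤ 1)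
    (hr0 : 0 < r) (hr : r < 1 / Real.log τ) :
    Filter.Tendsto (fun n : ℕ => E1RB α p r n ^ 2 / E2RB α p r k n)
      Filter.atTop (nhds 0) :=
  stmt1_general α p r k hα hk hp0 hp1 hkα hr0
end

section
/- Suppose k < τ·ln τ/(τ−1). Then there exists r₀ ∈ (0, 1/ln τ) such that for every r with r₀ < r < 1/ln τ one has E1(n)²/E2(n) → 0 as n → ∞. -/
open Filter Finset

/-!
Keeping only the summand of `E[X²]` at overlap `S = ⌈s n⌉` bounds `E[X]² / E[X²]` by
`exp (m (S/n - ln (1 - 1/d) / ln d - r ln f_n))`, where `f_n → 1 + (τ - 1) s^k` because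
`C(S,k)/C(n,k) → s^k` and `d^{-k} → 0`. Since `m → ∞`, the ratio tends to `0` as soon as
`s < r ln (1 + (τ - 1) s^k)`. Such `r < 1/ln τ` exist: `x ↦ x ln τ - ln (1 + (τ - 1) x^k)`
vanishes at `x = 1` with derivative `ln τ - (τ - 1) k / τ > 0`, so it is negative just to the
left of `1`.
-/

open Real Topology

lemma HasDerivAt.eventually_nhdsLT_lt_of_pos {f : ℝ → ℝ} {f' x : ℝ} (hf : HasDerivAt f f' x)
    (hf' : 0 < f') : ∀ᶠ y in 𝓝[<] x, f y < f x := by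
  filter_upwards [nhdsLT_le_nhdsNE x ((hasDerivAt_iff_tendsto_slope.mp hf).eventually
    (eventually_gt_nhds hf')), self_mem_nhdsWithin] with y hy hyx
  exact (slope_pos_iff_gt hyx).mp hy

lemma exists_mul_log_lt_log_one_add_mul_pow {τ : ℝ} {k : ℕ} (hτ : 1 < τ)
    (hkτ : (k : ℝ) < τ * log τ / (τ - 1)) :
    ∃ s ∈ Set.Ioo (0 : ℝ) 1, s * log τ < log (1 + (τ - 1) * s ^ k) := by
  have hderiv : HasDerivAt (fun x => x * log τ - log (1 + (τ - 1) * x ^ k))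
      (log τ - (τ - 1) * k / τ) 1 := by
    refine (((hasDerivAt_id 1).mul_const (log τ)).sub
      ((((hasDerivAt_pow k 1).const_mul (τ - 1)).const_add 1).log
        (ne_of_gt (by simp only [one_pow, mul_one]; linarith)))).congr_deriv ?_
    simp only [one_pow, mul_one, one_mul, add_sub_cancel]
  have hslope : 0 < log τ - (τ - 1) * k / τ := by
    rw [lt_div_iff₀ (by linarith)] at hkτ
    rw [sub_pos, div_lt_iff₀ (by linarith)]
    linarith
  obtain ⟨s, hs, hs01⟩ :=
    ((hderiv.eventually_nhdsLT_lt_of_pos hslope).and (Ioo_mem_nhdsLT zero_lt_one)).exists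
  exact ⟨s, hs01, by simpa using hs⟩

lemma tendsto_log_one_sub_inv_div_log :
    Tendsto (fun x : ℝ => log (1 - 1 / x) / log x) atTop (𝓝 0) := by
  have h : Tendsto (fun x : ℝ => log (1 - 1 / x)) atTop (𝓝 0) := by
    simpa using ((tendsto_const_nhds (x := (1 : ℝ))).sub tendsto_inv_atTop_zero).log
      (by norm_num)
  simpa [div_eq_mul_inv] using h.mul tendsto_log_atTop.inv_tendsto_atTop

lemma tendsto_cast_choose_div_pow {x : ℕ → ℕ} {s : ℝ}
    (hx : Tendsto (fun n => (x n : ℝ) / n) atTop (𝓝 s)) (k : ℕ) :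
    Tendsto (fun n => ((x n).choose k : ℝ) / (n : ℝ) ^ k) atTop
      (𝓝 (s ^ k / k.factorial)) := by
  have hprod : Tendsto (fun n : ℕ => ∏ j ∈ range k, ((x n : ℝ) / n - j / n)) atTop
      (𝓝 (∏ j ∈ range k, (s - 0))) :=
    tendsto_finsetProd _ fun j _ => hx.sub (tendsto_const_div_atTop_nhds_zero_nat (j : ℝ))
  rw [sub_zero, prod_const, card_range] at hprod
  refine (hprod.div_const _).congr' ?_
  filter_upwards [eventually_ne_atTop 0] with n hn
  rw [Nat.cast_choose_eq_descPochhammer_div, descPochhammer_eval_eq_prod_range]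
  simp only [← sub_div, prod_div_distrib, prod_const, card_range]
  ring

lemma tendsto_cast_choose_div_cast_choose {x : ℕ → ℕ} {s : ℝ}
    (hx : Tendsto (fun n => (x n : ℝ) / n) atTop (𝓝 s)) (k : ℕ) :
    Tendsto (fun n => ((x n).choose k : ℝ) / n.choose k) atTop (𝓝 (s ^ k)) := by
  have hid : Tendsto (fun n : ℕ => (n : ℝ) / n) atTop (𝓝 1) :=
    tendsto_const_nhds.congr' ((eventually_ne_atTop 0).mono fun n hn => by field_simp)
  have h := (tendsto_cast_choose_div_pow hx k).div (tendsto_cast_choose_div_pow hid k)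
    (by positivity)
  rw [one_pow, div_div_div_cancel_right₀ (by positivity), div_one] at h
  refine (h.congr' ?_)
  filter_upwards [eventually_ne_atTop 0] with n hn
  simp only [Pi.div_apply]
  field_simp

/-- `fRB` with `s ^ k` replaced by a general overlap `q` and `d ^ (-k)` by `e`. -/
noncomputable def pairFactor (p e q : ℝ) : ℝ := 1 + p / (1 - p) * (q - e) / (1 - e)

lemma sq_mul_pairFactor {p e : ℝ} (hp : p ≠ 1) (he : e ≠ 1) (q : ℝ) :
    (1 - p) ^ 2 * pairFactor p e q =
      (1 - p) * q + ((1 - p) ^ 2 - p * (1 - p) * e / (1 - e)) * (1 - q) := by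
  have : 1 - p ≠ 0 := sub_ne_zero.2 hp.symm
  have : 1 - e ≠ 0 := sub_ne_zero.2 he.symm
  unfold pairFactor
  field_simp
  ring

lemma pairFactor_nonneg {p e q : ℝ} (hp0 : 0 < p) (hp1 : p < 1) (he : e ≤ 1 - p)
    (hq : 0 ≤ q) : 0 ≤ pairFactor p e q := by
  have hp : 0 < 1 - p := by linarith
  have he1 : 0 < 1 - e := by linarith
  have : pairFactor p e q = (1 - p - e + p * q) / ((1 - p) * (1 - e)) := by
    unfold pairFactor
    field_simp
    ring
  rw [this]
  exact div_nonneg (by nlinarith) (by positivity)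

lemma tendsto_pairFactor {ι : Type*} {l : Filter ι} {e q : ι → ℝ} {Q : ℝ} (p : ℝ)
    (he : Tendsto e l (𝓝 0)) (hq : Tendsto q l (𝓝 Q)) :
    Tendsto (fun i => pairFactor p (e i) (q i)) l (𝓝 (1 + p / (1 - p) * Q)) := by
  have h := (((hq.sub he).const_mul (p / (1 - p))).div (tendsto_const_nhds.sub he)
    (by norm_num : (1 : ℝ) - 0 ≠ 0)).const_add 1
  simpa [pairFactor, mul_div_assoc] using h

lemma pow_div_mul_rpow_eq_exp {d f r : ℝ} {S n : ℕ} (hd : 1 < d) (hf : 0 < f) (hn : n ≠ 0) :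
    d ^ S / ((1 - 1 / d) ^ n * f ^ (r * (n * log d))) =
      exp (n * log d * (S / n - log (1 - 1 / d) / log d - r * log f)) := by
  have hd' : 0 < 1 - 1 / d := by
    rw [one_sub_div (by positivity)]; exact div_pos (by linarith) (by positivity)
  have hlog : log d ≠ 0 := (log_pos hd).ne'
  rw [show n * log d * (S / n - log (1 - 1 / d) / log d - r * log f) =
      S * log d - n * log (1 - 1 / d) - log f * (r * (n * log d)) by field_simp]
  rw [exp_sub, exp_sub, ← rpow_def_of_pos hf, exp_nat_mul, exp_nat_mul, exp_log (by positivity),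
    exp_log hd', div_div]

section Moments

variable {α p r : ℝ} {k n : ℕ}

lemma tendsto_dRB_atTop (hα : 0 < α) : Tendsto (dRB α) atTop atTop :=
  (tendsto_rpow_atTop hα).comp tendsto_natCast_atTop_atTop

lemma tendsto_mRB_atTop (hα : 0 < α) : Tendsto (mRB α) atTop atTop :=
  tendsto_natCast_atTop_atTop.atTop_mul_atTop₀ (tendsto_log_atTop.comp (tendsto_dRB_atTop hα))

noncomputable def E2RBTerm (α p r : ℝ) (k n S : ℕ) : ℝ :=
  dRB α n ^ n * (n.choose S : ℝ) * (dRB α n - 1) ^ (n - S) *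
    ((1 - p) ^ 2 * pairFactor p (dRB α n ^ (-(k : ℝ))) ((S.choose k : ℝ) / n.choose k)) ^
      (r * mRB α n)

lemma E2RB_eq_sum_E2RBTerm (hp1 : p < 1) (he : dRB α n ^ (-(k : ℝ)) ≠ 1) :
    E2RB α p r k n = ∑ S ∈ range (n + 1), E2RBTerm α p r k n S := by
  unfold E2RB E2RBTerm
  refine sum_congr rfl fun S _ => ?_
  rw [sq_mul_pairFactor hp1.ne he]

lemma E2RBTerm_nonneg (hp0 : 0 < p) (hp1 : p < 1) (hd : 1 ≤ dRB α n)
    (he : dRB α n ^ (-(k : ℝ)) ≤ 1 - p) (S : ℕ) : 0 ≤ E2RBTerm α p r k n S := by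
  have := pairFactor_nonneg hp0 hp1 he (q := (S.choose k : ℝ) / n.choose k) (by positivity)
  have : 0 ≤ dRB α n - 1 := by linarith
  unfold E2RBTerm
  positivity

lemma E2RB_nonneg (hp0 : 0 < p) (hp1 : p < 1) (hd : 1 ≤ dRB α n)
    (he : dRB α n ^ (-(k : ℝ)) ≤ 1 - p) : 0 ≤ E2RB α p r k n := by
  rw [E2RB_eq_sum_E2RBTerm hp1 (by linarith)]
  exact sum_nonneg fun S _ => E2RBTerm_nonneg hp0 hp1 hd he S

lemma E2RBTerm_le_E2RB (hp0 : 0 < p) (hp1 : p < 1) (hd : 1 ≤ dRB α n)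
    (he : dRB α n ^ (-(k : ℝ)) ≤ 1 - p) {S : ℕ} (hS : S ≤ n) :
    E2RBTerm α p r k n S ≤ E2RB α p r k n := by
  rw [E2RB_eq_sum_E2RBTerm hp1 (by linarith)]
  exact single_le_sum (fun S _ => E2RBTerm_nonneg hp0 hp1 hd he S) (mem_range.2 (by omega))

lemma E2RBTerm_pos (hp1 : p < 1) (hd : 1 < dRB α n) {S : ℕ} (hS : S ≤ n)
    (hf : 0 < pairFactor p (dRB α n ^ (-(k : ℝ))) ((S.choose k : ℝ) / n.choose k)) :
    0 < E2RBTerm α p r k n S := by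
  have : 0 < 1 - p := by linarith
  have : 0 < dRB α n - 1 := by linarith
  have : (0 : ℝ) < n.choose S := by exact_mod_cast Nat.choose_pos hS
  unfold E2RBTerm
  positivity

lemma E1RB_sq_div_E2RBTerm_le (hp1 : p < 1) (hd : 1 < dRB α n) {S : ℕ} (hS : S ≤ n)
    (hf : 0 < pairFactor p (dRB α n ^ (-(k : ℝ))) ((S.choose k : ℝ) / n.choose k)) :
    E1RB α p r n ^ 2 / E2RBTerm α p r k n S ≤
      dRB α n ^ S / ((1 - 1 / dRB α n) ^ n *
        pairFactor p (dRB α n ^ (-(k : ℝ))) ((S.choose k : ℝ) / n.choose k) ^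
          (r * mRB α n)) := by
  unfold E2RBTerm E1RB
  set d := dRB α n
  set m := mRB α n
  set f := pairFactor p (d ^ (-(k : ℝ))) ((S.choose k : ℝ) / n.choose k)
  have hp : 0 < 1 - p := by linarith
  have hd' : 0 < 1 - 1 / d := by
    rw [one_sub_div (by positivity)]; exact div_pos (by linarith) (by positivity)
  have hC : (1 : ℝ) ≤ n.choose S := by exact_mod_cast Nat.choose_pos hS
  calc (d ^ n * (1 - p) ^ (r * m)) ^ 2 / (d ^ n * (n.choose S : ℝ) * (d - 1) ^ (n - S) *
        ((1 - p) ^ 2 * f) ^ (r * m))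
      = d ^ n / ((n.choose S : ℝ) * (d - 1) ^ (n - S) * f ^ (r * m)) := by
        rw [mul_rpow (by positivity) hf.le, ← rpow_pow_comm hp.le]
        field_simp
    _ ≤ d ^ n / ((d - 1) ^ (n - S) * f ^ (r * m)) := by
        have : 0 < d - 1 := by linarith
        gcongr
        exact le_mul_of_one_le_left (by positivity) hC
    _ = d ^ S / ((1 - 1 / d) ^ (n - S) * f ^ (r * m)) := by
        rw [← Nat.add_sub_cancel' hS, pow_add, Nat.add_sub_cancel_left,
          one_sub_div (by positivity), div_pow]
        field_simp
    _ ≤ d ^ S / ((1 - 1 / d) ^ n * f ^ (r * m)) := by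
        refine div_le_div_of_nonneg_left (by positivity) (by positivity)
          (mul_le_mul_of_nonneg_right (pow_le_pow_of_le_one hd'.le ?_ (Nat.sub_le n S)) ?_)
        · simp only [one_div, sub_le_self_iff]; positivity
        · positivity

lemma E1RB_sq_div_E2RB_le (hp0 : 0 < p) (hp1 : p < 1) (hd : 1 < dRB α n)
    (he : dRB α n ^ (-(k : ℝ)) ≤ 1 - p) {S : ℕ} (hS : S ≤ n)
    (hf : 0 < pairFactor p (dRB α n ^ (-(k : ℝ))) ((S.choose k : ℝ) / n.choose k)) :
    E1RB α p r n ^ 2 / E2RB α p r k n ≤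
      dRB α n ^ S / ((1 - 1 / dRB α n) ^ n *
        pairFactor p (dRB α n ^ (-(k : ℝ))) ((S.choose k : ℝ) / n.choose k) ^
          (r * mRB α n)) :=
  calc E1RB α p r n ^ 2 / E2RB α p r k n
      ≤ E1RB α p r n ^ 2 / E2RBTerm α p r k n S :=
        div_le_div_of_nonneg_left (sq_nonneg _) (E2RBTerm_pos hp1 hd hS hf)
          (E2RBTerm_le_E2RB hp0 hp1 hd.le he hS)
    _ ≤ _ := E1RB_sq_div_E2RBTerm_le hp1 hd hS hf

theorem tendsto_E1RB_sq_div_E2RB (hα : 0 < α) (hk : 0 < k) (hp0 : 0 < p) (hp1 : p < 1) {s : ℝ}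
    (hs0 : 0 ≤ s) (hs1 : s ≤ 1) (hrs : s < r * log (1 + p / (1 - p) * s ^ k)) :
    Tendsto (fun n => E1RB α p r n ^ 2 / E2RB α p r k n) atTop (𝓝 0) := by
  set S : ℕ → ℕ := fun n => ⌈s * n⌉₊
  set e : ℕ → ℝ := fun n => dRB α n ^ (-(k : ℝ))
  set f : ℕ → ℝ := fun n => pairFactor p (e n) (((S n).choose k : ℝ) / n.choose k)
  set F := 1 + p / (1 - p) * s ^ k
  have hF : 0 < F := by
    have : 0 < 1 - p := by linarith
    positivity
  have hS : Tendsto (fun n => (S n : ℝ) / n) atTop (𝓝 s) :=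
    (tendsto_nat_ceil_mul_div_atTop hs0).comp tendsto_natCast_atTop_atTop
  have hd := tendsto_dRB_atTop hα
  have he : Tendsto e atTop (𝓝 0) := (tendsto_rpow_neg_atTop (by exact_mod_cast hk)).comp hd
  have hf : Tendsto f atTop (𝓝 F) :=
    tendsto_pairFactor p he (tendsto_cast_choose_div_cast_choose hS k)
  set u : ℕ → ℝ := fun n =>
    (S n : ℝ) / n - log (1 - 1 / dRB α n) / log (dRB α n) - r * log (f n)
  have hu : Tendsto u atTop (𝓝 (s - 0 - r * log F)) :=
    (hS.sub (tendsto_log_one_sub_inv_div_log.comp hd)).sub ((hf.log (by positivity)).const_mul r)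
  have hexp : Tendsto (fun n => exp (mRB α n * u n)) atTop (𝓝 0) :=
    tendsto_exp_atBot.comp ((tendsto_mRB_atTop hα).atTop_mul_neg (by linarith) hu)
  have hlarge : ∀ᶠ n in atTop, 1 < dRB α n ∧ e n ≤ 1 - p ∧ 0 < f n ∧ n ≠ 0 :=
    (hd.eventually_gt_atTop 1).and ((he.eventually_le_const (by linarith)).and
      ((hf.eventually_const_lt hF).and (eventually_ne_atTop 0)))
  refine squeeze_zero' ?_ ?_ hexp
  · filter_upwards [hlarge] with n ⟨hdn, hen, _⟩
    exact div_nonneg (sq_nonneg _) (E2RB_nonneg hp0 hp1 hdn.le hen)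
  · filter_upwards [hlarge] with n ⟨hdn, hen, hfn, hn⟩
    have hSn : S n ≤ n := Nat.ceil_le.2 (by nlinarith [(n.cast_nonneg : (0 : ℝ) ≤ n)])
    calc E1RB α p r n ^ 2 / E2RB α p r k n
        ≤ _ := E1RB_sq_div_E2RB_le hp0 hp1 hdn hen hSn hfn
      _ = _ := pow_div_mul_rpow_eq_exp hdn hfn hn

end Moments

/-- if k < τ ln τ/(τ-1), then there is r₀ ∈ (0, 1/ln τ) such that for all
r ∈ (r₀, 1/ln τ), E[X]²/E[X²] → 0. -/
theorem stmt2 (α p τ : ℝ) (k : ℕ) (hα : 0 < α) (hk : 2 ≤ k)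
    (hp0 : 0 < p) (hp1 : p < 1) (hτ : τ = 1 / (1 - p))
    (hkτ : (k : ℝ) < τ * Real.log τ / (τ - 1)) :
    ∃ r₀ : ℝ, 0 < r₀ ∧ r₀ < 1 / Real.log τ ∧
      ∀ r : ℝ, r₀ < r → r < 1 / Real.log τ →
        Filter.Tendsto (fun n : ℕ => E1RB α p r n ^ 2 / E2RB α p r k n)
          Filter.atTop (nhds 0) := by
  have hτ1 : 1 < τ := by rw [hτ, lt_div_iff₀ (by linarith)]; linarith
  have hτp : τ - 1 = p / (1 - p) := by
    rw [hτ]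
    field_simp [(by linarith : 1 - p ≠ 0)]
    ring
  obtain ⟨s, ⟨hs0, hs1⟩, hs⟩ := exists_mul_log_lt_log_one_add_mul_pow hτ1 hkτ
  have hlogτ : 0 < log τ := log_pos hτ1
  have hL : 0 < log (1 + (τ - 1) * s ^ k) := by nlinarith
  refine ⟨s / log (1 + (τ - 1) * s ^ k), by positivity, ?_, fun r hr _ => ?_⟩
  · rw [div_lt_div_iff₀ hL hlogτ]
    linarith
  · rw [div_lt_iff₀ hL, hτp] at hr
    exact tendsto_E1RB_sq_div_E2RB hα (by omega) hp0 hp1 hs0.le hs1.le (by linarith)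
end
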